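/- Suppose (u±, b±, f) are smooth, and satisfy: ∇·u± = ∇·b± = 0 in Ω±, ∂_t f = u₃⁺ = u₃⁻ and b₃⁺ = b₃⁻ = 0 on Γ, and u₃± = b₃± = 0 on Γ±. Let the magnetic field b♯± evolve by ∂_t b♯_i = -J⁻¹ u·∇b_i + J⁻¹ b·∇u_i + ∂₃(J⁻¹ ∂_tψ b_i) + (b_i u_k - u_i b_k)J⁻²∂_k J for i=1,2 and ∂_t b♯₃ = -J⁻¹ u·∇b₃ + J⁻¹ b·∇u₃ - ∂_i(J⁻¹ ∂_tψ b_i) - (b_i u₃ - u_i b₃)J⁻²∂_i J. Then ∂_t(∇·b♯) = 0, i.e. the divergence-free constraint on the magnetic field is propagated. -/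

import Mathlib

open Set

noncomputable section

/-- Points of `ℝ³`; the domain of the `+` state is `Ω⁺ = T² × (0,1)`,
with `Γ = T² × {0}` and `Γ₊ = T² × {1}`. -/
abbrev Pt := EuclideanSpace ℝ (Fin 3)

/-- Partial derivative in the `i`-th coordinate direction. -/
def pd (i : Fin 3) (u : Pt → ℝ) : Pt → ℝ := fun x => fderiv ℝ u x (EuclideanSpace.single i 1)

/-- Divergence of a vector field. -/
def divg (w : Pt → Fin 3 → ℝ) : Pt → ℝ := fun x => ∑ i : Fin 3, pd i (fun y => w y i) x

/-- The Jacobian `J = 1 + ∂₃ψ` of the change of variables. -/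
def Jf (ψ : Pt → ℝ) : Pt → ℝ := fun x => 1 + pd 2 ψ x

/-- The right-hand side `∂_t b♯` of the evolution of the magnetic field:
for `i = 1,2`: `-J⁻¹ u·∇b_i + J⁻¹ b·∇u_i + ∂₃(J⁻¹ ∂_tψ b_i) + (b_i u_k - u_i b_k) J⁻² ∂_k J`,
and for `i = 3`: `-J⁻¹ u·∇b₃ + J⁻¹ b·∇u₃ - ∂_i(J⁻¹ ∂_tψ b_i) - (b_i u₃ - u_i b₃) J⁻² ∂_i J`
(sum over tangential `i ∈ {1,2}`, Einstein summation over `k ∈ {1,2,3}`). -/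
def Fsharp (u b : Pt → Fin 3 → ℝ) (ψ ψt : Pt → ℝ) : Pt → Fin 3 → ℝ := fun x i =>
  if i = 2 then
    -(Jf ψ x)⁻¹ * (∑ k : Fin 3, u x k * pd k (fun y => b y 2) x)
      + (Jf ψ x)⁻¹ * (∑ k : Fin 3, b x k * pd k (fun y => u y 2) x)
      - (∑ j ∈ ({0, 1} : Finset (Fin 3)), pd j (fun y => (Jf ψ y)⁻¹ * ψt y * b y j) x)
      - (∑ j ∈ ({0, 1} : Finset (Fin 3)),
          (b x j * u x 2 - u x j * b x 2) * ((Jf ψ x) ^ 2)⁻¹ * pd j (Jf ψ) x)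
  else
    -(Jf ψ x)⁻¹ * (∑ k : Fin 3, u x k * pd k (fun y => b y i) x)
      + (Jf ψ x)⁻¹ * (∑ k : Fin 3, b x k * pd k (fun y => u y i) x)
      + pd 2 (fun y => (Jf ψ y)⁻¹ * ψt y * b y i) x
      + (∑ k : Fin 3, (b x i * u x k - u x i * b x k) * ((Jf ψ x) ^ 2)⁻¹ * pd k (Jf ψ) x)

section infra

variable {f g : Pt → ℝ} {x : Pt} {i k : Fin 3}

lemma pd_congr_nhds (h : f =ᶠ[nhds x] g) : pd i f x = pd i g x := by
  unfold pd; rw [Filter.EventuallyEq.fderiv_eq h]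

lemma pd_const (c : ℝ) : pd i (fun _ => c) x = 0 := by
  simp [pd, fderiv_const]

lemma pd_neg : pd i (fun y => -f y) x = -pd i f x := by
  simp [pd, fderiv_neg]

lemma pd_sub (hf : DifferentiableAt ℝ f x) (hg : DifferentiableAt ℝ g x) :
    pd i (fun y => f y - g y) x = pd i f x - pd i g x := by
  simp [pd, fderiv_fun_sub hf hg]

lemma pd_mul (hf : DifferentiableAt ℝ f x) (hg : DifferentiableAt ℝ g x) :
    pd i (fun y => f y * g y) x = pd i f x * g x + f x * pd i g x := by
  simp [pd, fderiv_fun_mul hf hg]; ring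

lemma pd_sum {ι : Type*} (s : Finset ι) (F : ι → Pt → ℝ)
    (h : ∀ j ∈ s, DifferentiableAt ℝ (F j) x) :
    pd i (fun y => ∑ j ∈ s, F j y) x = ∑ j ∈ s, pd i (F j) x := by
  simp [pd, fderiv_fun_sum h]

lemma pd_inv (hf : DifferentiableAt ℝ f x) (h0 : f x ≠ 0) :
    pd i (fun y => (f y)⁻¹) x = -((f x) ^ 2)⁻¹ * pd i f x := by
  have hcomp : (fun y => (f y)⁻¹) = (fun t : ℝ => t⁻¹) ∘ f := rfl
  unfold pd
  rw [hcomp, fderiv_comp x (differentiableAt_inv h0) hf, fderiv_inv]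
  simp [mul_comm]

lemma contDiffAt_pd (hf : ContDiffAt ℝ (⊤ : ℕ∞) f x) : ContDiffAt ℝ (⊤ : ℕ∞) (pd i f) x := by
  have h1 : ContDiffAt ℝ (⊤ : ℕ∞) (fderiv ℝ f) x := hf.fderiv_right (by simp)
  exact h1.clm_apply contDiffAt_const

lemma contDiff_pd (hf : ContDiff ℝ (⊤ : ℕ∞) f) : ContDiff ℝ (⊤ : ℕ∞) (pd i f) := by
  have h1 : ContDiff ℝ (⊤ : ℕ∞) (fderiv ℝ f) := hf.fderiv_right (by simp)
  exact h1.clm_apply contDiff_const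

lemma pd_differentiableAt (hf : ContDiffAt ℝ (⊤ : ℕ∞) f x) : DifferentiableAt ℝ (pd i f) x :=
  (contDiffAt_pd hf).differentiableAt (by simp)

lemma pd_comm (hf : ContDiffAt ℝ (⊤ : ℕ∞) f x) : pd i (pd k f) x = pd k (pd i f) x := by
  have hsym : IsSymmSndFDerivAt ℝ f x := hf.isSymmSndFDerivAt (by rw [minSmoothness_of_isRCLikeNormedField]; exact WithTop.coe_le_coe.mpr (le_top : (2:ℕ∞) ≤ ⊤))
  have hd : DifferentiableAt ℝ (fderiv ℝ f) x :=
    (hf.fderiv_right (m := 1) (WithTop.coe_le_coe.mpr le_top)).differentiableAt one_ne_zero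
  have key : ∀ a b : Fin 3, pd a (pd b f) x
      = fderiv ℝ (fderiv ℝ f) x (EuclideanSpace.single a 1) (EuclideanSpace.single b 1) := by
    intro a b
    unfold pd
    rw [show (fun y => fderiv ℝ f y (EuclideanSpace.single b 1))
        = fun y => (fderiv ℝ f y) ((fun _ => (EuclideanSpace.single b (1:ℝ) : Pt)) y) from rfl,
      fderiv_clm_apply hd (differentiableAt_const _)]
    simp
  rw [key, key, hsym.eq]

end infra

/-- `c i k = b_i u_k - u_i b_k`. -/
def cc (u b : Pt → Fin 3 → ℝ) (i k : Fin 3) : Pt → ℝ := fun y => b y i * u y k - u y i * b y k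

/-- `h j = J⁻¹ ψt b_j`. -/
def hh (b : Pt → Fin 3 → ℝ) (ψ ψt : Pt → ℝ) (j : Fin 3) : Pt → ℝ :=
  fun y => (Jf ψ y)⁻¹ * ψt y * b y j

/-- Antisymmetric matrix of functions carrying the `ψt` terms. -/
def dd (b : Pt → Fin 3 → ℝ) (ψ ψt : Pt → ℝ) (i k : Fin 3) : Pt → ℝ :=
  fun y => if i = 2 then (if k = 2 then 0 else -(hh b ψ ψt k y))
    else (if k = 2 then hh b ψ ψt i y else 0)

/-- `M i k = d i k - J⁻¹ c i k`; `Fsharp _ i = ∑ k ∂_k (M i k)` and `M` is antisymmetric. -/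
def MM (u b : Pt → Fin 3 → ℝ) (ψ ψt : Pt → ℝ) (i k : Fin 3) : Pt → ℝ :=
  fun y => dd b ψ ψt i k y - (Jf ψ y)⁻¹ * cc u b i k y

lemma dd_cases (b : Pt → Fin 3 → ℝ) (ψ ψt : Pt → ℝ) (i k : Fin 3) :
    dd b ψ ψt i k = if i = 2 then (if k = 2 then (fun _ => (0:ℝ)) else fun y => -(hh b ψ ψt k y))
      else (if k = 2 then hh b ψ ψt i else fun _ => (0:ℝ)) := by
  funext y; unfold dd; split_ifs <;> rfl

lemma MM_antisymm (u b : Pt → Fin 3 → ℝ) (ψ ψt : Pt → ℝ) (i k : Fin 3) :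
    MM u b ψ ψt i k = fun y => -(MM u b ψ ψt k i y) := by
  funext y
  by_cases hi : i = 2 <;> by_cases hk : k = 2 <;>
    simp [MM, dd, cc, hi, hk] <;> ring

/-- **Propagation of the divergence-free constraint for the magnetic field.**
Under the constraints `∇·u = ∇·b = 0` in `Ω⁺`, `∂_t f = u₃` and `b₃ = 0` on `Γ`,
`u₃ = b₃ = 0` on `Γ₊`, and `J ≥ 1/2`, the vector field `∂_t b♯` defined above is
divergence free in `Ω⁺`, i.e. `∂_t (∇·b♯) = 0`. -/
theorem divergence_constraint_propagation
    (u b : Pt → Fin 3 → ℝ) (ψ ψt : Pt → ℝ) (ft : Pt → ℝ)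
    (hu : ∀ i, ContDiff ℝ (⊤ : ℕ∞) (fun y => u y i)) (hb : ∀ i, ContDiff ℝ (⊤ : ℕ∞) (fun y => b y i))
    (hψ : ContDiff ℝ (⊤ : ℕ∞) ψ) (hψt : ContDiff ℝ (⊤ : ℕ∞) ψt)
    (hJ : ∀ x : Pt, x 2 ∈ Icc (0:ℝ) 1 → (1:ℝ) / 2 ≤ Jf ψ x)
    (hdivu : ∀ x : Pt, x 2 ∈ Ioo (0:ℝ) 1 → divg u x = 0)
    (hdivb : ∀ x : Pt, x 2 ∈ Ioo (0:ℝ) 1 → divg b x = 0)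
    (hΓ : ∀ x : Pt, x 2 = 0 → u x 2 = ft x ∧ b x 2 = 0)
    (hΓp : ∀ x : Pt, x 2 = 1 → u x 2 = 0 ∧ b x 2 = 0) :
    ∀ x : Pt, x 2 ∈ Ioo (0:ℝ) 1 → divg (Fsharp u b ψ ψt) x = 0 := by
  -- basic smoothness facts
  have hJc : ContDiff ℝ (⊤ : ℕ∞) (Jf ψ) := by
    unfold Jf; exact contDiff_const.add (contDiff_pd hψ)
  have hJne : ∀ y : Pt, y 2 ∈ Ioo (0:ℝ) 1 → Jf ψ y ≠ 0 := by
    intro y hy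
    have := hJ y ⟨le_of_lt hy.1, le_of_lt hy.2⟩
    linarith
  have smoothM : ∀ y : Pt, Jf ψ y ≠ 0 → ∀ i k : Fin 3,
      ContDiffAt ℝ (⊤ : ℕ∞) (MM u b ψ ψt i k) y := by
    intro y hy i k
    have hJinv : ContDiffAt ℝ (⊤ : ℕ∞) (fun z => (Jf ψ z)⁻¹) y := hJc.contDiffAt.inv hy
    have hhc : ∀ j, ContDiffAt ℝ (⊤ : ℕ∞) (hh b ψ ψt j) y := fun j =>
      (hJinv.mul hψt.contDiffAt).mul (hb j).contDiffAt
    have hdc : ContDiffAt ℝ (⊤ : ℕ∞) (dd b ψ ψt i k) y := by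
      rw [dd_cases]; split_ifs
      · exact contDiffAt_const
      · exact (hhc _).neg
      · exact hhc _
      · exact contDiffAt_const
    have hcc : ContDiffAt ℝ (⊤ : ℕ∞) (cc u b i k) y :=
      (((hb i).contDiffAt.mul (hu k).contDiffAt)).sub (((hu i).contDiffAt.mul (hb k).contDiffAt))
    exact hdc.sub (hJinv.mul hcc)
  -- the key pointwise identity
  have key : ∀ y : Pt, y 2 ∈ Ioo (0:ℝ) 1 → ∀ i : Fin 3,
      Fsharp u b ψ ψt y i = ∑ k : Fin 3, pd k (MM u b ψ ψt i k) y := by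
    intro y hy i
    have hJy : Jf ψ y ≠ 0 := hJne y hy
    have hJd : DifferentiableAt ℝ (Jf ψ) y := hJc.differentiable (by simp) y
    have hJinvd : DifferentiableAt ℝ (fun z => (Jf ψ z)⁻¹) y := hJd.inv hJy
    have hud : ∀ j, DifferentiableAt ℝ (fun z => u z j) y := fun j =>
      (hu j).differentiable (by simp) y
    have hbd : ∀ j, DifferentiableAt ℝ (fun z => b z j) y := fun j =>
      (hb j).differentiable (by simp) y
    have hψtd : DifferentiableAt ℝ ψt y := hψt.differentiable (by simp) y
    have hccd : ∀ i k : Fin 3, DifferentiableAt ℝ (cc u b i k) y := fun i k =>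
      ((hbd i).mul (hud k)).sub ((hud i).mul (hbd k))
    have hhd : ∀ j, DifferentiableAt ℝ (hh b ψ ψt j) y := fun j =>
      (hJinvd.mul hψtd).mul (hbd j)
    have hddd : ∀ i k : Fin 3, DifferentiableAt ℝ (dd b ψ ψt i k) y := by
      intro i k
      rw [dd_cases]; split_ifs
      · exact differentiableAt_const _
      · exact (hhd _).neg
      · exact hhd _
      · exact differentiableAt_const _
    have eq1 : ∀ k : Fin 3, pd k (MM u b ψ ψt i k) y = pd k (dd b ψ ψt i k) y
        - (-(Jf ψ y ^ 2)⁻¹ * pd k (Jf ψ) y * cc u b i k y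
          + (Jf ψ y)⁻¹ * (pd k (fun z => b z i) y * u y k + b y i * pd k (fun z => u z k) y
            - (pd k (fun z => u z i) y * b y k + u y i * pd k (fun z => b z k) y))) := by
      intro k
      have e1 : pd k (MM u b ψ ψt i k) y
          = pd k (dd b ψ ψt i k) y - pd k (fun z => (Jf ψ z)⁻¹ * cc u b i k z) y :=
        pd_sub (hddd i k) (hJinvd.mul (hccd i k))
      have e2 : pd k (fun z => (Jf ψ z)⁻¹ * cc u b i k z) y
          = pd k (fun z => (Jf ψ z)⁻¹) y * cc u b i k y + (Jf ψ y)⁻¹ * pd k (cc u b i k) y :=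
        pd_mul hJinvd (hccd i k)
      have e3 : pd k (fun z => (Jf ψ z)⁻¹) y = -(Jf ψ y ^ 2)⁻¹ * pd k (Jf ψ) y :=
        pd_inv hJd hJy
      have e4 : pd k (cc u b i k) y
          = pd k (fun z => b z i) y * u y k + b y i * pd k (fun z => u z k) y
            - (pd k (fun z => u z i) y * b y k + u y i * pd k (fun z => b z k) y) := by
        have s1 : pd k (cc u b i k) y
            = pd k (fun z => b z i * u z k) y - pd k (fun z => u z i * b z k) y :=
          pd_sub ((hbd i).mul (hud k)) ((hud i).mul (hbd k))
        rw [s1, pd_mul (hbd i) (hud k), pd_mul (hud i) (hbd k)]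
      rw [e1, e2, e3, e4]
    have hdu : pd 0 (fun z => u z 0) y + pd 1 (fun z => u z 1) y + pd 2 (fun z => u z 2) y
        = 0 := by
      have := hdivu y hy
      simpa [divg, Fin.sum_univ_three] using this
    have hdb : pd 0 (fun z => b z 0) y + pd 1 (fun z => b z 1) y + pd 2 (fun z => b z 2) y
        = 0 := by
      have := hdivb y hy
      simpa [divg, Fin.sum_univ_three] using this
    rw [Fin.sum_univ_three, eq1 0, eq1 1, eq1 2]
    by_cases hi : i = 2
    · subst hi
      have d0 : dd b ψ ψt 2 0 = fun z => -(hh b ψ ψt 0 z) := by rw [dd_cases]; simp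
      have d1 : dd b ψ ψt 2 1 = fun z => -(hh b ψ ψt 1 z) := by rw [dd_cases]; simp
      have d2 : dd b ψ ψt 2 2 = fun _ => (0:ℝ) := by rw [dd_cases]; simp
      rw [d0, d1, d2]
      simp only [Fsharp, if_true, eq_self_iff_true, reduceIte, hh,
        Finset.sum_pair (show (0 : Fin 3) ≠ 1 by decide), Fin.sum_univ_three, cc,
        pd_neg, pd_const, Fin.reduceEq]
      linear_combination ((Jf ψ y)⁻¹ * b y 2) * hdu - ((Jf ψ y)⁻¹ * u y 2) * hdb
    · have d0 : dd b ψ ψt i 0 = fun _ => (0:ℝ) := by rw [dd_cases]; simp [hi]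
      have d1 : dd b ψ ψt i 1 = fun _ => (0:ℝ) := by rw [dd_cases]; simp [hi]
      have d2 : dd b ψ ψt i 2 = fun z => (Jf ψ z)⁻¹ * ψt z * b z i := by
        rw [dd_cases]; simp only [hi, if_false, reduceIte]; rfl
      rw [d0, d1, d2]
      simp only [Fsharp, hi, reduceIte, hh, Fin.sum_univ_three, cc,
        pd_neg, pd_const, Fin.reduceEq, if_false, if_true]
      linear_combination ((Jf ψ y)⁻¹ * b y i) * hdu - ((Jf ψ y)⁻¹ * u y i) * hdb
  -- now the divergence of the right-hand side
  intro x hx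
  have hJx : Jf ψ x ≠ 0 := hJne x hx
  have hSopen : IsOpen {y : Pt | y 2 ∈ Ioo (0:ℝ) 1} :=
    isOpen_Ioo.preimage (EuclideanSpace.proj (2 : Fin 3)).continuous
  have hrw : ∀ i : Fin 3, pd i (fun y => Fsharp u b ψ ψt y i) x
      = ∑ k : Fin 3, pd i (pd k (MM u b ψ ψt i k)) x := by
    intro i
    have hev : (fun y => Fsharp u b ψ ψt y i)
        =ᶠ[nhds x] (fun y => ∑ k : Fin 3, pd k (MM u b ψ ψt i k) y) := by
      filter_upwards [hSopen.mem_nhds hx] with y hy using key y hy i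
    rw [pd_congr_nhds hev]
    exact pd_sum Finset.univ _ (fun k _ => pd_differentiableAt (smoothM x hJx i k))
  have anti : ∀ i k : Fin 3, pd i (pd k (MM u b ψ ψt i k)) x
      = -(pd k (pd i (MM u b ψ ψt k i)) x) := by
    intro i k
    calc pd i (pd k (MM u b ψ ψt i k)) x
        = pd i (pd k (fun y => -(MM u b ψ ψt k i y))) x := by rw [← MM_antisymm]
      _ = pd i (fun z => -(pd k (MM u b ψ ψt k i) z)) x := by
          congr 1; funext z; exact pd_neg
      _ = -(pd i (pd k (MM u b ψ ψt k i)) x) := pd_neg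
      _ = -(pd k (pd i (MM u b ψ ψt k i)) x) := by rw [pd_comm (smoothM x hJx k i)]
  have hsum : (∑ i : Fin 3, ∑ k : Fin 3, pd i (pd k (MM u b ψ ψt i k)) x) = 0 := by
    have h1 : (∑ i : Fin 3, ∑ k : Fin 3, pd i (pd k (MM u b ψ ψt i k)) x)
        = -(∑ i : Fin 3, ∑ k : Fin 3, pd k (pd i (MM u b ψ ψt k i)) x) := by
      rw [← Finset.sum_neg_distrib]
      refine Finset.sum_congr rfl fun i _ => ?_
      rw [← Finset.sum_neg_distrib]
      exact Finset.sum_congr rfl fun k _ => anti i k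
    have h2 : (∑ i : Fin 3, ∑ k : Fin 3, pd k (pd i (MM u b ψ ψt k i)) x)
        = ∑ i : Fin 3, ∑ k : Fin 3, pd i (pd k (MM u b ψ ψt i k)) x :=
      Finset.sum_comm
    rw [h2] at h1
    linarith
  calc divg (Fsharp u b ψ ψt) x
      = ∑ i : Fin 3, pd i (fun y => Fsharp u b ψ ψt y i) x := rfl
    _ = ∑ i : Fin 3, ∑ k : Fin 3, pd i (pd k (MM u b ψ ψt i k)) x :=
        Finset.sum_congr rfl fun i _ => hrw i
    _ = 0 := hsum
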